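/- arXiv:1704.04492 — 2 statements merged into one kernel-verified Lean document; each statement's English description precedes it below -/
import Mathlib

section
/- Let Ω ⊆ ℝ^n be open and connected, f ∈ C²(Ω, ℝ) with Df never vanishing on Ω, and ν : ℝ → ℝ^N a C² curve with |ν'| ≡ 1 on f(Ω) and ⟨ν'', ν'⟩ ≡ 0 on f(Ω). Set u = ν ∘ f. If u satisfies [[Du]]^⊥ Δu = 0 in Ω, then ν'' ∘ f ≡ 0 on Ω; consequently ν is affine on the interval f(Ω) and u(Ω) is contained in an affine line of ℝ^N. -/
/-!
Since `u = ν ∘ f`, the matrix `Du = ν'(f) ⊗ Df` has range `ℝ ν'(f)` (as `Df ≠ 0`), and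
`Δu = (Δf) ν'(f) + |Df|² ν''(f)`. The first summand lies in the range of `Du` and, because
`ν'' ⊥ ν'`, the second one lies in its orthogonal complement, so `[[Du]]^⊥ Δu = |Df|² ν''(f)`
and the equation forces `ν''(f) = 0`. Then `ν''` vanishes on the interval `f(Ω)`, so `ν` is affine
there, along the unit vector `ν'(f x₀)`.
-/

open Matrix Set
open scoped RealInnerProductSpace

/-- The orthogonal projection of ℝ^N onto the orthogonal complement of the range of X. -/
noncomputable def perpProj {N n : ℕ} (X : Matrix (Fin N) (Fin n) ℝ)
    (w : EuclideanSpace ℝ (Fin N)) : EuclideanSpace ℝ (Fin N) :=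
  (Submodule.orthogonalProjectionOnto (LinearMap.range (Matrix.toEuclideanLin X))ᗮ w :
    EuclideanSpace ℝ (Fin N))

/-- The gradient matrix Du(x) of u : ℝ^n → ℝ^N. -/
noncomputable def gradMatrix {N n : ℕ} (u : EuclideanSpace ℝ (Fin n) → EuclideanSpace ℝ (Fin N))
    (x : EuclideanSpace ℝ (Fin n)) : Matrix (Fin N) (Fin n) ℝ :=
  Matrix.of fun α i => fderiv ℝ u x (EuclideanSpace.single i 1) α

/-- The Laplacian Δu(x) of u : ℝ^n → ℝ^N. -/
noncomputable def lapl {N n : ℕ} (u : EuclideanSpace ℝ (Fin n) → EuclideanSpace ℝ (Fin N))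
    (x : EuclideanSpace ℝ (Fin n)) : EuclideanSpace ℝ (Fin N) :=
  ∑ i, fderiv ℝ (fun y => fderiv ℝ u y (EuclideanSpace.single i 1)) x (EuclideanSpace.single i 1)

open Filter Topology

theorem perpProj_add_of_mem_range_of_mem_orthogonal {N n : ℕ} (X : Matrix (Fin N) (Fin n) ℝ)
    {a b : EuclideanSpace ℝ (Fin N)} (ha : a ∈ LinearMap.range (toEuclideanLin X))
    (hb : b ∈ (LinearMap.range (toEuclideanLin X))ᗮ) :
    perpProj X (a + b) = b := by
  rw [perpProj, ← Submodule.starProjection_apply, map_add,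
    Submodule.starProjection_orthogonal_apply_eq_zero ha,
    Submodule.starProjection_eq_self_iff.mpr hb, zero_add]

theorem range_toEuclideanLin_vecMulVec {ι κ : Type*} [Fintype κ] [DecidableEq κ]
    (v : EuclideanSpace ℝ ι) {g : κ → ℝ} (hg : g ≠ 0) :
    LinearMap.range (toEuclideanLin (vecMulVec ⇑v g)) = ℝ ∙ v := by
  have happly : ∀ y, toEuclideanLin (vecMulVec ⇑v g) y = (g ⬝ᵥ ⇑y) • v := by
    intro y
    ext α
    simp [toLpLin_apply, vecMulVec_mulVec]
  apply le_antisymm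
  · rintro _ ⟨y, rfl⟩
    rw [happly]
    exact Submodule.smul_mem _ _ (Submodule.mem_span_singleton_self v)
  · rw [Submodule.span_singleton_le_iff_mem]
    refine ⟨(g ⬝ᵥ g)⁻¹ • WithLp.toLp 2 g, ?_⟩
    rw [map_smul, happly, smul_smul, WithLp.ofLp_toLp,
      inv_mul_cancel₀ (mt dotProduct_self_eq_zero.mp hg), one_smul]

theorem Convex.eq_of_deriv_eq_zero {F : Type*} [NormedAddCommGroup F] [NormedSpace ℝ F]
    {S : Set ℝ} (hS : Convex ℝ S) {g : ℝ → F} (hg : ∀ t ∈ S, DifferentiableAt ℝ g t)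
    (hg' : ∀ t ∈ S, deriv g t = 0) {s t : ℝ} (hs : s ∈ S) (ht : t ∈ S) : g t = g s := by
  have := hS.norm_image_sub_le_of_norm_deriv_le (C := 0) hg
    (fun r hr => by rw [hg' r hr, norm_zero]) hs ht
  rwa [zero_mul, norm_le_zero_iff, sub_eq_zero] at this

theorem Convex.eq_add_smul_of_deriv_deriv_eq_zero {F : Type*} [NormedAddCommGroup F]
    [NormedSpace ℝ F] {S : Set ℝ} (hS : Convex ℝ S) {ν : ℝ → F} (hν : ContDiff ℝ 2 ν)
    (h : ∀ t ∈ S, deriv (deriv ν) t = 0) {t₀ : ℝ} (ht₀ : t₀ ∈ S) :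
    ∀ t ∈ S, ν t = (ν t₀ - t₀ • deriv ν t₀) + t • deriv ν t₀ := by
  have hν' : ContDiff ℝ 1 (deriv ν) := ContDiff.deriv' (n := 1) hν
  have hconst : ∀ t ∈ S, deriv ν t = deriv ν t₀ := fun t ht =>
    hS.eq_of_deriv_eq_zero (fun s _ => (hν'.differentiable one_ne_zero) s) h ht₀ ht
  have hline : ∀ t, HasDerivAt (fun s => ν s - s • deriv ν t₀) (deriv ν t - deriv ν t₀) t :=
    fun t => ((hν.differentiable two_ne_zero) t).hasDerivAt.sub
      (by simpa using (hasDerivAt_id t).smul_const (deriv ν t₀))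
  intro t ht
  have := hS.eq_of_deriv_eq_zero (fun s _ => (hline s).differentiableAt)
    (fun s hs => by rw [(hline s).deriv, hconst s hs, sub_self]) ht₀ ht
  rw [← this]
  abel

section CurveComposition

variable {E F : Type*} [NormedAddCommGroup E] [NormedSpace ℝ E] [NormedAddCommGroup F]
  [NormedSpace ℝ F] {f : E → ℝ} {ν : ℝ → F} {x : E}

theorem fderiv_comp_curve_apply (hν : DifferentiableAt ℝ ν (f x)) (hf : DifferentiableAt ℝ f x)
    (z : E) : fderiv ℝ (ν ∘ f) x z = fderiv ℝ f x z • deriv ν (f x) := by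
  rw [(hν.hasDerivAt.hasFDerivAt.comp x hf.hasFDerivAt).fderiv]
  simp

theorem fderiv_fderiv_comp_curve_apply (hν : ContDiff ℝ 2 ν) (hf : ContDiffAt ℝ 2 f x) (z w : E) :
    fderiv ℝ (fun y => fderiv ℝ (ν ∘ f) y z) x w =
      fderiv ℝ (fun y => fderiv ℝ f y z) x w • deriv ν (f x) +
        (fderiv ℝ f x z * fderiv ℝ f x w) • deriv (deriv ν) (f x) := by
  have hν' : ContDiff ℝ 1 (deriv ν) := ContDiff.deriv' (n := 1) hν
  have hDf : DifferentiableAt ℝ (fun y => fderiv ℝ f y z) x :=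
    ((hf.fderiv_right (m := 1) le_rfl).differentiableAt one_ne_zero).clm_apply
      (differentiableAt_const z)
  have hfirst : (fun y => fderiv ℝ (ν ∘ f) y z) =ᶠ[𝓝 x]
      fun y => fderiv ℝ f y z • deriv ν (f y) := by
    filter_upwards [hf.eventually (by simp)] with y hy
    exact fderiv_comp_curve_apply ((hν.differentiable two_ne_zero) _)
      (hy.differentiableAt two_ne_zero) z
  have hνf : HasFDerivAt (fun y => deriv ν (f y)) _ x :=
    ((hν'.differentiable one_ne_zero) (f x)).hasDerivAt.hasFDerivAt.comp x
      (hf.differentiableAt two_ne_zero).hasFDerivAt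
  have hprod : HasFDerivAt (fun y => fderiv ℝ f y z • deriv ν (f y)) _ x :=
    hDf.hasFDerivAt.smul hνf
  rw [hfirst.fderiv_eq, hprod.fderiv]
  simp [smul_smul, add_comm]

end CurveComposition

theorem EuclideanSpace.clm_apply_single_ne_zero {ι F : Type*} [Fintype ι] [DecidableEq ι]
    [NormedAddCommGroup F] [NormedSpace ℝ F] {L : EuclideanSpace ℝ ι →L[ℝ] F} (hL : L ≠ 0) :
    (fun i => L (EuclideanSpace.single i 1)) ≠ 0 := by
  contrapose! hL
  refine ContinuousLinearMap.coe_injective ((EuclideanSpace.basisFun ι ℝ).toBasis.ext fun i => ?_)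
  simpa using congr_fun hL i

section EuclideanCurveComposition

variable {N n : ℕ} {f : EuclideanSpace ℝ (Fin n) → ℝ} {ν : ℝ → EuclideanSpace ℝ (Fin N)}
  {x : EuclideanSpace ℝ (Fin n)}

theorem gradMatrix_comp_curve (hν : DifferentiableAt ℝ ν (f x)) (hf : DifferentiableAt ℝ f x) :
    gradMatrix (ν ∘ f) x =
      vecMulVec ⇑(deriv ν (f x)) fun i => fderiv ℝ f x (EuclideanSpace.single i 1) := by
  ext α i
  simp [gradMatrix, vecMulVec_apply, fderiv_comp_curve_apply hν hf, mul_comm]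

theorem lapl_comp_curve (hν : ContDiff ℝ 2 ν) (hf : ContDiffAt ℝ 2 f x) :
    lapl (ν ∘ f) x =
      (∑ i, fderiv ℝ (fun y => fderiv ℝ f y (EuclideanSpace.single i 1)) x
          (EuclideanSpace.single i 1)) • deriv ν (f x) +
        ((fun i => fderiv ℝ f x (EuclideanSpace.single i 1)) ⬝ᵥ
          fun i => fderiv ℝ f x (EuclideanSpace.single i 1)) • deriv (deriv ν) (f x) := by
  simp only [lapl, fderiv_fderiv_comp_curve_apply hν hf, Finset.sum_add_distrib,
    ← Finset.sum_smul, dotProduct]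

theorem deriv_deriv_comp_eq_zero_of_perpProj_lapl_eq_zero (hν : ContDiff ℝ 2 ν)
    (hf : ContDiffAt ℝ 2 f x) (hDf : fderiv ℝ f x ≠ 0)
    (horth : ⟪deriv (deriv ν) (f x), deriv ν (f x)⟫ = 0)
    (hPDE : perpProj (gradMatrix (ν ∘ f) x) (lapl (ν ∘ f) x) = 0) :
    deriv (deriv ν) (f x) = 0 := by
  have hg := EuclideanSpace.clm_apply_single_ne_zero hDf
  have hrange : LinearMap.range (toEuclideanLin (gradMatrix (ν ∘ f) x)) = ℝ ∙ deriv ν (f x) := by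
    rw [gradMatrix_comp_curve ((hν.differentiable two_ne_zero) _)
      (hf.differentiableAt two_ne_zero), range_toEuclideanLin_vecMulVec _ hg]
  rw [lapl_comp_curve hν hf, perpProj_add_of_mem_range_of_mem_orthogonal] at hPDE
  · exact (smul_eq_zero.mp hPDE).resolve_left (mt dotProduct_self_eq_zero.mp hg)
  · rw [hrange]
    exact Submodule.smul_mem _ _ (Submodule.mem_span_singleton_self _)
  · rw [hrange]
    refine Submodule.smul_mem _ _ ?_
    rwa [Submodule.mem_orthogonal_singleton_iff_inner_right, real_inner_comm]

end EuclideanCurveComposition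

/-- if u = ν ∘ f with f C², Df ≠ 0 on the open connected set Ω, ν a C²
unit-speed curve on f(Ω) with ν'' ⊥ ν' there, and u solves [[Du]]^⊥ Δu = 0 in Ω, then
ν'' ∘ f ≡ 0 on Ω, ν is affine on f(Ω) and u(Ω) is contained in an affine line. -/
theorem stmt6 {N n : ℕ} (Ω : Set (EuclideanSpace ℝ (Fin n)))
    (hΩ : IsOpen Ω) (hconn : IsConnected Ω)
    (f : EuclideanSpace ℝ (Fin n) → ℝ) (hf : ContDiffOn ℝ 2 f Ω)
    (hDf : ∀ x ∈ Ω, fderiv ℝ f x ≠ 0)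
    (ν : ℝ → EuclideanSpace ℝ (Fin N)) (hν : ContDiff ℝ 2 ν)
    (hunit : ∀ t ∈ f '' Ω, ‖deriv ν t‖ = 1)
    (horth : ∀ t ∈ f '' Ω, ⟪deriv (deriv ν) t, deriv ν t⟫ = 0)
    (u : EuclideanSpace ℝ (Fin n) → EuclideanSpace ℝ (Fin N)) (hu : u = ν ∘ f)
    (hPDE : ∀ x ∈ Ω, perpProj (gradMatrix u x) (lapl u x) = 0) :
    (∀ x ∈ Ω, deriv (deriv ν) (f x) = 0) ∧
    (∃ c d : EuclideanSpace ℝ (Fin N), ∀ t ∈ f '' Ω, ν t = c + t • d) ∧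
    (∃ p v : EuclideanSpace ℝ (Fin N), v ≠ 0 ∧ ∀ x ∈ Ω, ∃ s : ℝ, u x = p + s • v) := by
  subst hu
  have hν'' : ∀ x ∈ Ω, deriv (deriv ν) (f x) = 0 := fun x hx =>
    deriv_deriv_comp_eq_zero_of_perpProj_lapl_eq_zero hν (hf.contDiffAt (hΩ.mem_nhds hx))
      (hDf x hx) (horth _ (mem_image_of_mem f hx)) (hPDE x hx)
  have hS : Convex ℝ (f '' Ω) := convex_iff_ordConnected.mpr
    (hconn.image f hf.continuousOn).isPreconnected.ordConnected
  obtain ⟨x₀, hx₀⟩ := hconn.nonempty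
  have haff := hS.eq_add_smul_of_deriv_deriv_eq_zero hν (forall_mem_image.mpr hν'')
    (mem_image_of_mem f hx₀)
  have hd : deriv ν (f x₀) ≠ 0 :=
    ne_zero_of_norm_ne_zero ((hunit _ (mem_image_of_mem f hx₀)).trans_ne one_ne_zero)
  exact ⟨hν'', ⟨_, _, haff⟩, _, _, hd, fun x hx => ⟨f x, haff _ (mem_image_of_mem f hx)⟩⟩
end

section
/- Let u ∈ C²(Ω, ℝ^N) with Ω ⊆ ℝ^n open, and suppose u solves the normalized p-Laplace system Du ⊗ Du : D²u + (|Du|²/(p-2)) Δu = 0 in Ω for some p ∈ (2,∞). Then u solves both systems: Du ⊗ Du : D²u + (|Du|²/(p-2)) [[Du]]^∥ Δu = 0 and |Du|² [[Du]]^⊥ Δu = 0 in Ω. -/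
open Matrix Set

/-- Orthogonal projection onto the range of X. -/
noncomputable def parProj {N n : ℕ} (X : Matrix (Fin N) (Fin n) ℝ)
    (w : EuclideanSpace ℝ (Fin N)) : EuclideanSpace ℝ (Fin N) :=
  (Submodule.orthogonalProjectionOnto (LinearMap.range (Matrix.toEuclideanLin X)) w :
    EuclideanSpace ℝ (Fin N))

/-!
Write `Du ⊗ Du : D²u = Du b` with `b_i = ∑_{β,j} ∂_j u^β ∂_i∂_j u^β`, so this term lies in the
range `R(Du)`. Splitting `Δu = [[Du]]^∥ Δu + [[Du]]^⊥ Δu`, the system becomes a sum of a vector in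
`R(Du)` and a vector in `R(Du)ᗮ`, which vanishes only if both summands do.
-/

theorem Submodule.add_smul_starProjection_eq_zero_of_add_smul_eq_zero {𝕜 E : Type*} [RCLike 𝕜]
    [NormedAddCommGroup E] [InnerProductSpace 𝕜 E] {K : Submodule 𝕜 E}
    [K.HasOrthogonalProjection] {a w : E} {c : 𝕜} (ha : a ∈ K) (h : a + c • w = 0) :
    a + c • K.starProjection w = 0 ∧ c • Kᗮ.starProjection w = 0 := by
  rw [← K.starProjection_add_starProjection_orthogonal w, smul_add, ← add_assoc] at h
  exact Submodule.disjoint_iff_add_eq_zero.1 K.orthogonal_disjoint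
    (K.add_mem ha (K.smul_mem c (K.starProjection_apply_mem w)))
    (Kᗮ.smul_mem c (Kᗮ.starProjection_apply_mem w)) h

theorem Matrix.toLp_sum_mul_mul_mem_range_toEuclideanLin {m n : Type*} [Fintype m] [Fintype n]
    [DecidableEq n] (X : Matrix m n ℝ) (H : n → n → m → ℝ) :
    WithLp.toLp 2 (fun α => ∑ β, ∑ i, ∑ j, X α i * X β j * H i j β) ∈
      LinearMap.range (toEuclideanLin X) := by
  refine ⟨WithLp.toLp 2 fun i => ∑ β, ∑ j, X β j * H i j β, ?_⟩
  ext α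
  simp only [toLpLin_toLp, toLin'_apply, mulVec, dotProduct, Finset.mul_sum, mul_assoc]
  exact Finset.sum_comm

theorem add_smul_parProj_eq_zero_of_add_smul_eq_zero {N n : ℕ}
    (X : Matrix (Fin N) (Fin n) ℝ) (H : Fin n → Fin n → Fin N → ℝ) (w : EuclideanSpace ℝ (Fin N))
    (c : ℝ) (h : ∀ α, ∑ β, ∑ i, ∑ j, X α i * X β j * H i j β + c * w α = 0) :
    (∀ α, ∑ β, ∑ i, ∑ j, X α i * X β j * H i j β + c * parProj X w α = 0) ∧
      c • perpProj X w = 0 := by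
  obtain ⟨hpar, hperp⟩ := Submodule.add_smul_starProjection_eq_zero_of_add_smul_eq_zero
    (X.toLp_sum_mul_mul_mem_range_toEuclideanLin H) (c := c) (w := w) (by ext α; exact h α)
  exact ⟨fun α => congrArg (· α) hpar, hperp⟩

theorem stmt12_general {N n : ℕ} (Ω : Set (EuclideanSpace ℝ (Fin n)))
    (p : ℝ) (hp : 2 < p)
    (u : EuclideanSpace ℝ (Fin n) → EuclideanSpace ℝ (Fin N))
    (hPDE : ∀ x ∈ Ω, ∀ α : Fin N,
      (∑ β : Fin N, ∑ i : Fin n, ∑ j : Fin n,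
          fderiv ℝ u x (EuclideanSpace.single i 1) α *
          fderiv ℝ u x (EuclideanSpace.single j 1) β *
          fderiv ℝ (fun y => fderiv ℝ u y (EuclideanSpace.single j 1)) x
            (EuclideanSpace.single i 1) β)
        + ((∑ γ : Fin N, ∑ i : Fin n, (fderiv ℝ u x (EuclideanSpace.single i 1) γ) ^ 2) / (p - 2)) *
            lapl u x α = 0) :
    (∀ x ∈ Ω, ∀ α : Fin N,
      (∑ β : Fin N, ∑ i : Fin n, ∑ j : Fin n,
          fderiv ℝ u x (EuclideanSpace.single i 1) α *
          fderiv ℝ u x (EuclideanSpace.single j 1) β *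
          fderiv ℝ (fun y => fderiv ℝ u y (EuclideanSpace.single j 1)) x
            (EuclideanSpace.single i 1) β)
        + ((∑ γ : Fin N, ∑ i : Fin n, (fderiv ℝ u x (EuclideanSpace.single i 1) γ) ^ 2) / (p - 2)) *
            parProj (gradMatrix u x) (lapl u x) α = 0) ∧
    (∀ x ∈ Ω,
      (∑ γ : Fin N, ∑ i : Fin n, (fderiv ℝ u x (EuclideanSpace.single i 1) γ) ^ 2) •
        perpProj (gradMatrix u x) (lapl u x) = 0) := by
  have hp2 : p - 2 ≠ 0 := sub_ne_zero.2 hp.ne'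
  have split x (hx : x ∈ Ω) := add_smul_parProj_eq_zero_of_add_smul_eq_zero (gradMatrix u x)
    (fun i j β => fderiv ℝ (fun y => fderiv ℝ u y (EuclideanSpace.single j 1)) x
      (EuclideanSpace.single i 1) β) (lapl u x) _ (hPDE x hx)
  refine ⟨fun x hx => (split x hx).1, fun x hx => ?_⟩
  have h := congrArg ((p - 2) • ·) (split x hx).2
  simpa only [smul_smul, mul_div_cancel₀ _ hp2, smul_zero] using h

/-- a C² solution of the normalized p-Laplace system
Du ⊗ Du : D²u + (|Du|²/(p-2)) Δu = 0, p ∈ (2,∞), solves both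
Du ⊗ Du : D²u + (|Du|²/(p-2)) [[Du]]^∥ Δu = 0 and |Du|² [[Du]]^⊥ Δu = 0 in Ω. -/
theorem stmt12 {N n : ℕ} (Ω : Set (EuclideanSpace ℝ (Fin n))) (hΩ : IsOpen Ω)
    (p : ℝ) (hp : 2 < p)
    (u : EuclideanSpace ℝ (Fin n) → EuclideanSpace ℝ (Fin N)) (hu : ContDiffOn ℝ 2 u Ω)
    (hPDE : ∀ x ∈ Ω, ∀ α : Fin N,
      (∑ β : Fin N, ∑ i : Fin n, ∑ j : Fin n,
          fderiv ℝ u x (EuclideanSpace.single i 1) α *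
          fderiv ℝ u x (EuclideanSpace.single j 1) β *
          fderiv ℝ (fun y => fderiv ℝ u y (EuclideanSpace.single j 1)) x
            (EuclideanSpace.single i 1) β)
        + ((∑ γ : Fin N, ∑ i : Fin n, (fderiv ℝ u x (EuclideanSpace.single i 1) γ) ^ 2) / (p - 2)) *
            lapl u x α = 0) :
    (∀ x ∈ Ω, ∀ α : Fin N,
      (∑ β : Fin N, ∑ i : Fin n, ∑ j : Fin n,
          fderiv ℝ u x (EuclideanSpace.single i 1) α *
          fderiv ℝ u x (EuclideanSpace.single j 1) β *
          fderiv ℝ (fun y => fderiv ℝ u y (EuclideanSpace.single j 1)) x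
            (EuclideanSpace.single i 1) β)
        + ((∑ γ : Fin N, ∑ i : Fin n, (fderiv ℝ u x (EuclideanSpace.single i 1) γ) ^ 2) / (p - 2)) *
            parProj (gradMatrix u x) (lapl u x) α = 0) ∧
    (∀ x ∈ Ω,
      (∑ γ : Fin N, ∑ i : Fin n, (fderiv ℝ u x (EuclideanSpace.single i 1) γ) ^ 2) •
        perpProj (gradMatrix u x) (lapl u x) = 0) :=
  stmt12_general Ω p hp u hPDE
end
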